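/- arXiv:2007.06098 — 4 statements merged into one kernel-verified Lean document; each statement's English description precedes it below -/
import Mathlib

section
/- Let A ∈ ℝ^{k×N} be a nonnegative matrix and s a positive integer with (k+1)·s < N. Suppose there exist λ_1,…,λ_T > 0, sets S_1,…,S_T ⊆ [N] with |S_t| ≤ s, scalars y_t^{(0)} ∈ ℝ and row vectors y_t ∈ ℝ^k such that for each t, y_t^{(0)}·𝟙_{[N]} + y_t·A ≤ 𝟙_{S_t} (coordinatewise), Σ_t λ_t y_t ≥ 0 (coordinatewise in ℝ^k), and Σ_t λ_t y_t^{(0)} > 0, with T ≤ k+1. Then a contradiction follows; i.e., no such certificate exists. -/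
/-!
The sets `S t` cover at most `T * s ≤ (k + 1) * s < N` coordinates, so some coordinate `j` lies
in none of them. There every certificate inequality reads `y0 t + (y t ⬝ A) j ≤ 0`; summing with
the weights `lam t` gives `∑ lam t * y0 t + ((∑ lam t * y t) ⬝ A) j ≤ 0`, where the second term is
nonnegative because `A ≥ 0` and `∑ lam t * y t ≥ 0`. Hence `∑ lam t * y0 t ≤ 0`.
-/

open Finset

theorem exists_forall_notMem_of_card_mul_lt {ι α : Type*} [Fintype ι] [Fintype α]
    [DecidableEq α] (S : ι → Finset α) {s : ℕ} (hS : ∀ t, #(S t) ≤ s)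
    (hcard : Fintype.card ι * s < Fintype.card α) : ∃ j, ∀ t, j ∉ S t := by
  have hunion : #(univ.biUnion S) < #(univ : Finset α) :=
    calc #(univ.biUnion S) ≤ ∑ t, #(S t) := card_biUnion_le
      _ ≤ ∑ _t : ι, s := sum_le_sum fun t _ => hS t
      _ = Fintype.card ι * s := by rw [sum_const, smul_eq_mul, card_univ]
      _ < #(univ : Finset α) := by rwa [card_univ]
  obtain ⟨j, -, hj⟩ := exists_mem_notMem_of_card_lt_card hunion
  exact ⟨j, fun t ht => hj (mem_biUnion.mpr ⟨t, mem_univ t, ht⟩)⟩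

theorem sum_mul_add_sum_mul_eq {ι κ R : Type*} [Fintype ι] [Fintype κ] [CommSemiring R]
    (lam y0 : ι → R) (y : ι → κ → R) (a : κ → R) :
    ∑ t, lam t * (y0 t + ∑ i, y t i * a i) = ∑ t, lam t * y0 t + ∑ i, (∑ t, lam t * y t i) * a i := by
  simp only [mul_add, mul_sum, sum_add_distrib, sum_mul, mul_assoc]
  rw [sum_comm]

theorem stmt1_general (N k s T : ℕ) (hN : (k + 1) * s < N) (hT : T ≤ k + 1)
    (A : Matrix (Fin k) (Fin N) ℝ) (hA : ∀ i j, 0 ≤ A i j)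
    (lam : Fin T → ℝ) (hlam : ∀ t, 0 < lam t)
    (S : Fin T → Finset (Fin N)) (hS : ∀ t, (S t).card ≤ s)
    (y0 : Fin T → ℝ) (y : Fin T → Fin k → ℝ)
    (hineq : ∀ t, ∀ j : Fin N,
      y0 t + ∑ i, y t i * A i j ≤ if j ∈ S t then 1 else 0)
    (hpos : ∀ i : Fin k, 0 ≤ ∑ t, lam t * y t i)
    (hobj : 0 < ∑ t, lam t * y0 t) :
    False := by
  obtain ⟨j, hj⟩ := exists_forall_notMem_of_card_mul_lt S hS (by
    simpa only [Fintype.card_fin] using (Nat.mul_le_mul_right s hT).trans_lt hN)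
  have hcomb : ∑ t, lam t * (y0 t + ∑ i, y t i * A i j) ≤ 0 :=
    sum_nonpos fun t _ => mul_nonpos_of_nonneg_of_nonpos (hlam t).le
      (by simpa only [if_neg (hj t)] using hineq t j)
  have hAj : 0 ≤ ∑ i, (∑ t, lam t * y t i) * A i j :=
    sum_nonneg fun i _ => mul_nonneg (hpos i) (hA i j)
  rw [sum_mul_add_sum_mul_eq] at hcomb
  linarith

/-- No Farkas-type infeasibility certificate exists when
(k+1)·s < N: positive multipliers λ_t, sets S_t of size ≤ s, scalars y0_t and
row vectors y_t with y0_t·𝟙 + y_t·A ≤ 𝟙_{S_t}, Σ λ_t y_t ≥ 0 and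
Σ λ_t y0_t > 0 (with T ≤ k+1) lead to a contradiction. -/
theorem stmt1 (N k s T : ℕ) (hs : 0 < s) (hN : (k + 1) * s < N) (hT : T ≤ k + 1)
    (A : Matrix (Fin k) (Fin N) ℝ) (hA : ∀ i j, 0 ≤ A i j)
    (lam : Fin T → ℝ) (hlam : ∀ t, 0 < lam t)
    (S : Fin T → Finset (Fin N)) (hS : ∀ t, (S t).card ≤ s)
    (y0 : Fin T → ℝ) (y : Fin T → Fin k → ℝ)
    (hineq : ∀ t, ∀ j : Fin N,
      y0 t + ∑ i, y t i * A i j ≤ if j ∈ S t then 1 else 0)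
    (hpos : ∀ i : Fin k, 0 ≤ ∑ t, lam t * y t i)
    (hobj : 0 < ∑ t, lam t * y0 t) :
    False :=
  stmt1_general N k s T hN hT A hA lam hlam S hS y0 y hineq hpos hobj
end

section
/- Let x ∈ ℝ^N with x ≥ 0 and x ≠ 0, and let r ≥ 1 be an integer. There exists a deterministic r-round adaptive procedure making at most ⌈N^{1/r}⌉ − 1 OR-queries per round (each query asks whether a given subset S ⊆ [N] intersects supp(x)) that outputs an index j with x_j > 0. -/
open scoped Classical

/-- An `r`-round deterministic OR-query algorithm on vectors indexed by `Fin N`: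
in each round it makes a batch of OR-queries (a list of subsets), and the next
round depends on the vector of Boolean answers; after `r` rounds it outputs an
index. -/
inductive ORAlg (N : ℕ) : ℕ → Type
  | leaf (j : Fin N) : ORAlg N 0
  | node {r : ℕ} (qs : List (Finset (Fin N)))
      (next : (Fin qs.length → Bool) → ORAlg N r) : ORAlg N (r + 1)

/-- Answer of the OR-query `S` on the vector `x`: does `S` meet `supp(x)`? -/
noncomputable def orAnswer {N : ℕ} (x : Fin N → ℝ) (S : Finset (Fin N)) : Bool :=
  if ∃ j ∈ S, x j ≠ 0 then true else false

/-- Running an algorithm on input vector `x`. -/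
noncomputable def orRun {N : ℕ} : {r : ℕ} → ORAlg N r → (Fin N → ℝ) → Fin N
  | _, .leaf j, _ => j
  | _, .node qs next, x => orRun (next (fun i => orAnswer x (qs.get i))) x

/-- The maximum number of queries made in any single round. -/
noncomputable def orWidth {N : ℕ} : {r : ℕ} → ORAlg N r → ℕ
  | _, .leaf _ => 0
  | _, .node qs next =>
      max qs.length (Finset.univ.sup fun b : Fin qs.length → Bool => orWidth (next b))

/-!
Keep a list of at most `k ^ r` candidate indices that is known to meet `supp x`, where
`k = ⌈N ^ (1/r)⌉`. Cut it into `k` consecutive blocks of length `k ^ (r - 1)` and query the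
first `k - 1` of them. If some block answers yes, recurse on it; otherwise the support meets
the last block. Either way one round shrinks the bound on the candidates from `k ^ r` to
`k ^ (r - 1)`, so after `r` rounds a single candidate, lying in `supp x`, is left.
-/

lemma orAnswer_eq_true_iff {N : ℕ} (x : Fin N → ℝ) (S : Finset (Fin N)) :
    orAnswer x S = true ↔ ∃ j ∈ S, x j ≠ 0 := by
  unfold orAnswer
  split_ifs with h <;> simpa using h

lemma le_ceil_rpow_inv_pow {x : ℝ} (hx : 0 ≤ x) {r : ℕ} (hr : r ≠ 0) :
    x ≤ (⌈x ^ ((1 : ℝ) / r)⌉₊ : ℝ) ^ r :=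
  calc x = (x ^ ((1 : ℝ) / r)) ^ r := by rw [one_div, Real.rpow_inv_natCast_pow hx hr]
    _ ≤ (⌈x ^ ((1 : ℝ) / r)⌉₊ : ℝ) ^ r := by gcongr; exact Nat.le_ceil _

section Blocks

variable {α : Type*}

/-- Shorter than `m`, or empty, once it runs past the end of `C`. -/
def List.block (C : List α) (m i : ℕ) : List α := (C.drop (i * m)).take m

lemma List.exists_mem_block_of_mem_take (C : List α) (m : ℕ) {j : α} :
    ∀ {n : ℕ}, j ∈ C.take (n * m) → ∃ i < n, j ∈ C.block m i
  | 0, hj => by simp at hj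
  | n + 1, hj => by
    rw [Nat.succ_mul, List.take_add] at hj
    rcases List.mem_append.1 hj with hj | hj
    · obtain ⟨i, hi, hji⟩ := exists_mem_block_of_mem_take C m hj
      exact ⟨i, by omega, hji⟩
    · exact ⟨n, n.lt_succ_self, hj⟩

lemma List.length_drop_sub_one_mul_le {C : List α} {k m : ℕ} (hC : C.length ≤ k * m) :
    (C.drop ((k - 1) * m)).length ≤ m := by
  have := Nat.sub_one_mul k m
  simp only [List.length_drop]
  omega

end Blocks

/-- `j₀` is only output when the candidate list `C` is empty. -/
noncomputable def blockSearch {N : ℕ} (k : ℕ) (j₀ : Fin N) :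
    (r : ℕ) → List (Fin N) → ORAlg N r
  | 0, C => .leaf (C.headD j₀)
  | r + 1, C =>
      .node ((List.range (k - 1)).map fun i => (C.block (k ^ r) i).toFinset) fun b =>
        if h : ∃ i, b i = true then blockSearch k j₀ r (C.block (k ^ r) h.choose)
        else blockSearch k j₀ r (C.drop ((k - 1) * k ^ r))

section BlockSearch

variable {N : ℕ} (k : ℕ) (j₀ : Fin N)

lemma orWidth_blockSearch :
    ∀ (r : ℕ) (C : List (Fin N)), orWidth (blockSearch k j₀ r C) ≤ k - 1
  | 0, _ => by simp [blockSearch, orWidth]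
  | r + 1, C => by
    rw [blockSearch, orWidth]
    refine max_le (by simp) (Finset.sup_le fun b _ => ?_)
    split_ifs
    exacts [orWidth_blockSearch r _, orWidth_blockSearch r _]

lemma orRun_blockSearch_ne_zero (x : Fin N → ℝ) :
    ∀ (r : ℕ) (C : List (Fin N)), C.length ≤ k ^ r → (∃ j ∈ C, x j ≠ 0) →
      x (orRun (blockSearch k j₀ r C) x) ≠ 0
  | 0, [a], _, ⟨j, hj, hxj⟩ => by
    rw [List.mem_singleton] at hj
    subst hj
    simpa [blockSearch, orRun] using hxj
  | 0, [], _, ⟨_, hj, _⟩ => by simp at hj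
  | 0, _ :: _ :: _, hC, _ => by simp at hC
  | r + 1, C, hC, ⟨j, hjC, hxj⟩ => by
    set qs := (List.range (k - 1)).map fun i => (C.block (k ^ r) i).toFinset
    have hqs : ∀ i : Fin qs.length, orAnswer x (qs.get i) = true ↔
        ∃ j ∈ C.block (k ^ r) i, x j ≠ 0 := by
      intro i
      simp [qs, orAnswer_eq_true_iff]
    rw [blockSearch, orRun]
    split_ifs with hyes
    · exact orRun_blockSearch_ne_zero x r _ (List.length_take_le _ _)
        ((hqs _).1 hyes.choose_spec)
    · refine orRun_blockSearch_ne_zero x r _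
        (List.length_drop_sub_one_mul_le (by rwa [pow_succ, mul_comm] at hC)) ⟨j, ?_, hxj⟩
      -- `j` lies in none of the queried blocks, hence in the remainder
      rw [← List.take_append_drop ((k - 1) * k ^ r) C, List.mem_append] at hjC
      refine hjC.resolve_left fun hj => ?_
      obtain ⟨i, hi, hji⟩ := C.exists_mem_block_of_mem_take _ hj
      exact hyes ⟨⟨i, by simpa [qs] using hi⟩, (hqs _).2 ⟨j, hji, hxj⟩⟩

end BlockSearch

/-- there is a deterministic `r`-round OR-query algorithm making at
most `⌈N^{1/r}⌉ - 1` queries per round which, on any nonzero nonnegative input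
`x`, outputs an index `j` with `x j > 0`. -/
theorem stmt3 (N r : ℕ) (hN : 1 ≤ N) (hr : 1 ≤ r) :
    ∃ T : ORAlg N r, orWidth T ≤ ⌈(N : ℝ) ^ ((1 : ℝ) / r)⌉₊ - 1 ∧
      ∀ x : Fin N → ℝ, (∀ j, 0 ≤ x j) → x ≠ 0 → 0 < x (orRun T x) := by
  set k := ⌈(N : ℝ) ^ ((1 : ℝ) / r)⌉₊
  have hNk : N ≤ k ^ r := by
    exact_mod_cast le_ceil_rpow_inv_pow (Nat.cast_nonneg N) (Nat.one_le_iff_ne_zero.1 hr)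
  refine ⟨blockSearch k ⟨0, hN⟩ r (List.finRange N), orWidth_blockSearch k _ r _, ?_⟩
  intro x hx₀ hx
  obtain ⟨j, hj⟩ := Function.ne_iff.1 hx
  have hsupp := orRun_blockSearch_ne_zero k ⟨0, hN⟩ x r (List.finRange N)
    (by simpa using hNk) ⟨j, List.mem_finRange j, hj⟩
  exact (hx₀ _).lt_of_ne' hsupp
end

section
/- Let G be a connected multigraph on n vertices, let D ∈ {0,1,…,n−1}, let V_L be the set of vertices of degree ≤ D and V_H = V \ V_L. Let E' ⊆ E(G) contain all edges incident on each vertex of V_L and at least D edges incident on each vertex of V_H. Then the graph (V, E') has at most ⌊n/D⌋ connected components. -/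
/-!
A component of `G'` containing a vertex of `G`-degree `> D` contains that vertex's at least `D`
`G'`-neighbours. A component all of whose vertices have `G`-degree `≤ D` keeps every `G`-edge
leaving it, so by connectivity of `G` it is all of `V`, which has `n ≥ D` vertices. Hence every
component has at least `D` vertices, and there are at most `n / D` of them.
-/

open Finset

namespace SimpleGraph

variable {V : Type*} {G G' : SimpleGraph V}

lemma Reachable.connectedComponentMk_eq {c : G'.ConnectedComponent} {u v : V}
    (huv : G.Reachable u v)
    (hc : ∀ x y, G'.connectedComponentMk x = c → G.Adj x y → G'.Adj x y)
    (hu : G'.connectedComponentMk u = c) : G'.connectedComponentMk v = c := by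
  obtain ⟨p⟩ := huv
  induction p with
  | nil => exact hu
  | cons hxy _ ih =>
    exact ih (ConnectedComponent.connectedComponentMk_eq_of_adj (hc _ _ hu hxy) ▸ hu)

lemma Connected.connectedComponentMk_eq_of_forall_adj (hG : G.Connected)
    (c : G'.ConnectedComponent)
    (hc : ∀ x y, G'.connectedComponentMk x = c → G.Adj x y → G'.Adj x y) (v : V) :
    G'.connectedComponentMk v = c := by
  obtain ⟨u, rfl⟩ := c.exists_rep
  exact (hG u v).connectedComponentMk_eq hc rfl

variable [Fintype V] [DecidableRel G.Adj] [DecidableRel G'.Adj]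
  [DecidableEq G'.ConnectedComponent]

lemma degree_le_card_connectedComponent (w : V) :
    G'.degree w ≤ #{v | G'.connectedComponentMk v = G'.connectedComponentMk w} := by
  rw [← card_neighborFinset_eq_degree]
  refine card_le_card fun x hx ↦ ?_
  rw [mem_neighborFinset] at hx
  simpa using ConnectedComponent.connectedComponentMk_eq_of_adj hx.symm

lemma le_card_connectedComponent {D : ℕ} (hG : G.Connected) (hDV : D ≤ Fintype.card V)
    (hlow : ∀ v, G.degree v ≤ D → ∀ w, G.Adj v w → G'.Adj v w)
    (hhigh : ∀ v, D < G.degree v → D ≤ G'.degree v) (c : G'.ConnectedComponent) :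
    D ≤ #{v | G'.connectedComponentMk v = c} := by
  by_cases hc : ∃ w, G'.connectedComponentMk w = c ∧ D < G.degree w
  · obtain ⟨w, rfl, hw⟩ := hc
    exact (hhigh w hw).trans (degree_le_card_connectedComponent w)
  · push Not at hc
    have hall := hG.connectedComponentMk_eq_of_forall_adj c fun x _ hx ↦ hlow x (hc x hx) _
    simpa [hall] using hDV

end SimpleGraph

theorem stmt4_general (V : Type) [Fintype V]
    (G G' : SimpleGraph V) [DecidableRel G.Adj] [DecidableRel G'.Adj]
    (n D : ℕ) (hn : Fintype.card V = n) (hD : 1 ≤ D) (hDn : D ≤ n - 1)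
    (hconn : G.Connected)
    (hlow : ∀ v : V, G.degree v ≤ D → ∀ w, G.Adj v w → G'.Adj v w)
    (hhigh : ∀ v : V, D < G.degree v → D ≤ G'.degree v) :
    Nat.card G'.ConnectedComponent ≤ n / D := by
  classical
  have hcomp := SimpleGraph.le_card_connectedComponent hconn (by omega) hlow hhigh
  have hcount := mul_card_image_le_card_of_maps_to (s := univ) (t := univ)
    (f := G'.connectedComponentMk) (fun _ _ ↦ mem_univ _) D fun c _ ↦ hcomp c
  rw [Nat.card_eq_fintype_card, Nat.le_div_iff_mul_le hD, mul_comm, ← hn]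
  simpa using hcount

/-- Let `G` be a connected graph on `n` vertices, `D ≤ n - 1`
with `D ≥ 1`, and let `G' ≤ G` be a subgraph containing all edges incident on
each vertex of degree ≤ D, and at least `D` edges incident on each vertex of
degree > D. Then `G'` has at most `⌊n / D⌋` connected components. -/
theorem stmt4 (V : Type) [Fintype V] [DecidableEq V]
    (G G' : SimpleGraph V) [DecidableRel G.Adj] [DecidableRel G'.Adj]
    (n D : ℕ) (hn : Fintype.card V = n) (hD : 1 ≤ D) (hDn : D ≤ n - 1)
    (hconn : G.Connected) (hsub : G' ≤ G)
    (hlow : ∀ v : V, G.degree v ≤ D → ∀ w, G.Adj v w → G'.Adj v w)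
    (hhigh : ∀ v : V, D < G.degree v → D ≤ G'.degree v) :
    Nat.card G'.ConnectedComponent ≤ n / D :=
  stmt4_general V G G' n D hn hD hDn hconn hlow hhigh
end

section
/- Single element recovery lower bound with OR-queries: for any r-round deterministic algorithm with OR-query access to a nonzero vector x ∈ ℝ^N_{≥0} making strictly fewer than N^{1/r} − 1 queries in every round, there is an adversary strategy maintaining an active set A ⊆ [N] such that after all r rounds, every 1-answered query Q satisfies Q ∩ A = ∅ or |Q ∩ A| ≥ 2, and hence for any index j the algorithm outputs, there is a 0/1-vector consistent with all answers with x_j = 0. -/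
open scoped Classical

open Finset

/-! The adversary keeps an active set `A` of candidate support elements, initially all of `[N]`.
In each round it answers 0, one at a time, to queries meeting the current `A` in at most `d ^ r`
elements (`d - 1` the width, `r` the number of remaining rounds), deleting those elements from
`A`, and 1 to all the others. A round thus costs fewer than `d ^ (r + 1)` elements, and every
1-answered query keeps more than `d ^ r` elements of `A`, more than the rest of the game can
delete. Since `d ^ r < N`, at least two elements survive, so every 1-answered query meets the
final active set `B` twice; the indicator of `B` minus the output `j` is then consistent with all
answers, nonzero, and vanishes at `j`. -/

lemma exists_subset_disjoint_or_lt_card_inter {ι α : Type*} [DecidableEq ι] [DecidableEq α]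
    (Q : ι → Finset α) (t : ℕ) (s : Finset ι) (A : Finset α) :
    ∃ z ⊆ s, ∃ A' ⊆ A, #A ≤ #A' + #z * t ∧ (∀ i ∈ z, Disjoint (Q i) A') ∧
      ∀ i ∈ s, i ∉ z → t < #(Q i ∩ A') := by
  induction s using Finset.strongInduction generalizing A with
  | _ s ih =>
    by_cases hlarge : ∀ i ∈ s, t < #(Q i ∩ A)
    · exact ⟨∅, empty_subset _, A, subset_rfl, by simp, by simp, fun i hi _ => hlarge i hi⟩
    push Not at hlarge
    obtain ⟨i₀, hi₀, hsmall⟩ := hlarge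
    obtain ⟨z, hz, A', hA', hcard, hdisj, hlarge⟩ :=
      ih (s.erase i₀) (erase_ssubset hi₀) (A \ Q i₀)
    have hi₀z : i₀ ∉ z := fun h => by simpa using hz h
    refine ⟨insert i₀ z, insert_subset hi₀ (hz.trans (erase_subset _ _)), A',
      hA'.trans sdiff_subset, ?_, ?_, ?_⟩
    · have hsplit := card_sdiff_add_card_inter A (Q i₀)
      rw [inter_comm] at hsplit
      rw [card_insert_of_notMem hi₀z, add_one_mul]
      linarith
    · intro i hi
      rcases mem_insert.1 hi with rfl | hi
      · exact disjoint_sdiff.mono_right hA'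
      · exact hdisj i hi
    · intro i hi hiz
      exact hlarge i (mem_erase.2 ⟨fun h => hiz (h ▸ mem_insert_self _ _), hi⟩)
        (fun h => hiz (mem_insert_of_mem h))

lemma one_lt_card_inter_of_subset {α : Type*} [DecidableEq α] {Q A B : Finset α} {t : ℕ}
    (hBA : B ⊆ A) (hA : #A < #B + t) (hQ : t < #(Q ∩ A)) : 1 < #(Q ∩ B) := by
  have hcover : Q ∩ A ⊆ (Q ∩ B) ∪ (A \ B) := by
    intro x
    simp only [mem_inter, mem_union, mem_sdiff]
    tauto
  have hle := (card_le_card hcover).trans (card_union_le _ _)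
  have hdiff := card_sdiff_of_subset hBA
  have hBA' := card_le_card hBA
  omega

lemma orAnswer_indicator_one {N : ℕ} (E S : Finset (Fin N)) :
    orAnswer ((E : Set (Fin N)).indicator 1) S = true ↔ (S ∩ E).Nonempty := by
  simp [orAnswer, Finset.Nonempty]

lemma length_le_orWidth_node {N r : ℕ} (qs : List (Finset (Fin N)))
    (next : (Fin qs.length → Bool) → ORAlg N r) : qs.length ≤ orWidth (.node qs next) :=
  le_max_left _ _

lemma orWidth_le_orWidth_node {N r : ℕ} (qs : List (Finset (Fin N)))
    (next : (Fin qs.length → Bool) → ORAlg N r) (b : Fin qs.length → Bool) :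
    orWidth (next b) ≤ orWidth (.node qs next) :=
  (le_sup (f := fun b => orWidth (next b)) (mem_univ b)).trans (le_max_right _ _)

theorem exists_orRun_indicator_erase_eq {N d r : ℕ} (T : ORAlg N r) (hT : orWidth T < d)
    (A : Finset (Fin N)) :
    ∃ B ⊆ A, ∃ j, #A < #B + d ^ r ∧ orRun T ((B.erase j : Set (Fin N)).indicator 1) = j := by
  induction T generalizing A with
  | leaf j => exact ⟨A, subset_rfl, j, by simp, rfl⟩
  | @node r qs next ih =>
    obtain ⟨z, -, A', hA', hcard, hdisj, hlarge⟩ :=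
      exists_subset_disjoint_or_lt_card_inter qs.get (d ^ r) univ A
    obtain ⟨B, hB, j, hBcard, hrun⟩ :=
      ih (fun i => decide (i ∉ z)) ((orWidth_le_orWidth_node qs next _).trans_lt hT) A'
    refine ⟨B, hB.trans hA', j, ?_, ?_⟩
    · have hz : #z + 1 ≤ d := by
        have hzlen := card_le_univ z
        rw [Fintype.card_fin] at hzlen
        have := length_le_orWidth_node qs next
        omega
      have := Nat.mul_le_mul_right (d ^ r) hz
      rw [add_one_mul] at this
      rw [pow_succ']
      linarith
    · have hanswers : (fun i => orAnswer ((B.erase j : Set (Fin N)).indicator 1) (qs.get i)) =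
          fun i => decide (i ∉ z) := by
        funext i
        rw [Bool.eq_iff_iff, orAnswer_indicator_one, decide_eq_true_iff]
        by_cases hi : i ∈ z
        · have hdisj' := (hdisj i hi).mono_right ((erase_subset j B).trans hB)
          simp only [hi, not_true_eq_false, iff_false, not_nonempty_iff_eq_empty]
          exact disjoint_iff_inter_eq_empty.1 hdisj'
        · simp only [hi, not_false_eq_true, iff_true, inter_erase]
          exact (one_lt_card_iff_nontrivial.1
            (one_lt_card_inter_of_subset hB hBcard (hlarge i (mem_univ i) hi))).erase_nonempty
      change orRun (next _) _ = j
      rw [hanswers]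
      exact hrun

lemma succ_pow_lt_of_lt_rpow_one_div_sub_one {w N r : ℕ}
    (h : (w : ℝ) < (N : ℝ) ^ ((1 : ℝ) / r) - 1) : (w + 1) ^ r < N := by
  rcases r.eq_zero_or_pos with rfl | hr
  · simp only [CharP.cast_eq_zero, div_zero, Real.rpow_zero, sub_self] at h
    exact absurd h (not_lt.2 w.cast_nonneg)
  · have hlt : ((w + 1 : ℕ) : ℝ) < (N : ℝ) ^ (r : ℝ)⁻¹ := by
      rw [one_div] at h
      push_cast
      linarith
    rw [Real.lt_rpow_inv_iff_of_pos (by positivity) (by positivity) (by positivity),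
      Real.rpow_natCast] at hlt
    exact_mod_cast hlt

theorem stmt10_general (N r : ℕ) (T : ORAlg N r)
    (hW : (orWidth T : ℝ) < (N : ℝ) ^ ((1 : ℝ) / r) - 1) :
    ∃ x : Fin N → ℝ, (∀ j, x j = 0 ∨ x j = 1) ∧ x ≠ 0 ∧ x (orRun T x) = 0 := by
  obtain ⟨B, -, j, hB, hrun⟩ := exists_orRun_indicator_erase_eq T (lt_add_one (orWidth T)) univ
  have hpow := succ_pow_lt_of_lt_rpow_one_div_sub_one hW
  rw [card_univ, Fintype.card_fin] at hB
  obtain ⟨m, hm⟩ : (B.erase j).Nonempty :=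
    (one_lt_card_iff_nontrivial.1 (by omega)).erase_nonempty
  refine ⟨(B.erase j : Set (Fin N)).indicator 1, fun i => ?_, fun h => ?_, ?_⟩
  · by_cases hi : i ∈ B.erase j
    · exact Or.inr (Set.indicator_of_mem (mem_coe.2 hi) _)
    · exact Or.inl (Set.indicator_of_notMem (mem_coe.2.mt hi) _)
  · have hxm := congrFun h m
    rw [Set.indicator_of_mem (mem_coe.2 hm)] at hxm
    exact one_ne_zero hxm
  · rw [hrun]
    exact Set.indicator_of_notMem (fun h => (mem_coe.1 h |> mem_erase.1).1 rfl) _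

/-- single element recovery lower bound with OR-queries: any
`r`-round deterministic OR-query algorithm making strictly fewer than
`N^{1/r} - 1` queries in every round fails on some nonzero nonnegative 0/1
input vector `x`: the index it outputs on `x` satisfies `x j = 0` (the
adversary's fooling vector is consistent with all the answers the algorithm
received). -/
theorem stmt10 (N r : ℕ) (hr : 1 ≤ r) (T : ORAlg N r)
    (hW : (orWidth T : ℝ) < (N : ℝ) ^ ((1 : ℝ) / r) - 1) :
    ∃ x : Fin N → ℝ, (∀ j, x j = 0 ∨ x j = 1) ∧ x ≠ 0 ∧ x (orRun T x) = 0 :=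
  stmt10_general N r T hW
end
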